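/- Let A = {a_n}, B = {b_n} be two sequences of positive integers with a_n ≤ b_n for all n, and ψ: ℕ → (0,1). Define S_{A,B}(ψ) = { x ∈ [0,1] : max{‖a_n x‖, ‖b_n x‖} < ψ(n) for infinitely many n ∈ ℕ }. Then the Hausdorff dimension of S_{A,B}(ψ) is at most κ, where κ = inf{ s > 0 : Σ_{n=1}^∞ (gcd(a_n,b_n) + b_n ψ(n)) · (ψ(n)/b_n)^s < ∞ }. -/

import Mathlib

/-!
If `x ∈ [0,1]` has `‖a x‖, ‖b x‖ < ψ`, then `k = round (b x) ∈ {0, …, b}` satisfies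
`|x - k / b| < ψ / b` and, since `a ≤ b`, `‖a k / b‖ < 2ψ`. Modulo `1` the fractions `a k / b`,
`k < b`, run through the multiples of `1 / b'`, `b' = b / gcd(a, b)`, each `gcd(a, b)` times, so
at most `4 (gcd(a, b) + b ψ)` such `k` exist. The `n`-th set is thus covered by that many
intervals of length `2ψ / b`, and a convergent Hausdorff–Cantelli series forces
`μH[s]` of the limsup set to vanish.
-/

open MeasureTheory Filter Set

/-- Distance from a real number to the nearest integer. -/
noncomputable def nint (x : ℝ) : ℝ := |x - (round x : ℝ)|

open scoped ENNReal Topology Finset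

section HausdorffCantelli

variable {X ι : Type*} [EMetricSpace X] [MeasurableSpace X] [BorelSpace X]

theorem hausdorffMeasure_setOf_frequently_eq_zero {s : ℝ} (hs : 0 < s) (I : ℕ → Finset ι)
    (E : ℕ → ι → Set X) (hE : ∑' n, ∑ i ∈ I n, Metric.ediam (E n i) ^ s ≠ ∞) :
    μH[s] {x | ∃ᶠ n in atTop, ∃ i ∈ I n, x ∈ E n i} = 0 := by
  set T : ℕ → ℝ≥0∞ := fun N => ∑' j, ∑ i ∈ I (j + N), Metric.ediam (E (j + N) i) ^ s
  have hT : Tendsto T atTop (𝓝 0) := ENNReal.tendsto_sum_nat_add _ hE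
  have hdiam : ∀ N j, ∀ i ∈ I (j + N), Metric.ediam (E (j + N) i) ≤ T N ^ s⁻¹ := by
    intro N j i hi
    rw [ENNReal.le_rpow_inv_iff hs]
    exact (Finset.single_le_sum (fun _ _ => zero_le) hi).trans
      (ENNReal.le_tsum (f := fun j => ∑ i ∈ I (j + N), Metric.ediam (E (j + N) i) ^ s) j)
  have hr : Tendsto (fun N => T N ^ s⁻¹) atTop (𝓝 0) := by
    have h := ((ENNReal.continuous_rpow_const (y := s⁻¹)).tendsto 0).comp hT
    rwa [ENNReal.zero_rpow_of_pos (inv_pos.2 hs)] at h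
  have hcover : ∀ N, {x | ∃ᶠ n in atTop, ∃ i ∈ I n, x ∈ E n i} ⊆
      ⋃ p : Σ j, I (j + N), E (p.1 + N) p.2 := by
    intro N x hx
    obtain ⟨n, hn, i, hi, hxi⟩ := frequently_atTop.1 hx N
    obtain ⟨j, rfl⟩ := Nat.exists_eq_add_of_le' hn
    exact mem_iUnion.2 ⟨⟨j, i, hi⟩, hxi⟩
  refine le_antisymm ?_ zero_le
  calc μH[s] {x | ∃ᶠ n in atTop, ∃ i ∈ I n, x ∈ E n i}
      ≤ liminf (fun N => ∑' p : Σ j, I (j + N), Metric.ediam (E (p.1 + N) p.2) ^ s) atTop :=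
        Measure.hausdorffMeasure_le_liminf_tsum (ι := fun N => Σ j, I (j + N)) s _ _ hr
          (fun N p => E (p.1 + N) p.2) (.of_forall fun N p => hdiam N p.1 p.2 p.2.2)
          (.of_forall hcover)
    _ = liminf T atTop := by
        refine congrArg (liminf · atTop) (funext fun N => ?_)
        rw [ENNReal.tsum_sigma']
        exact tsum_congr fun j => Finset.tsum_subtype (I (j + N)) fun i => Metric.ediam (E (j + N) i) ^ s
    _ = 0 := hT.liminf_eq

theorem dimH_setOf_frequently_le {s : ℝ} (hs : 0 < s) (I : ℕ → Finset ι)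
    (E : ℕ → ι → Set X) (hE : ∑' n, ∑ i ∈ I n, Metric.ediam (E n i) ^ s ≠ ∞) :
    dimH {x | ∃ᶠ n in atTop, ∃ i ∈ I n, x ∈ E n i} ≤ ENNReal.ofReal s :=
  dimH_le_of_hausdorffMeasure_ne_top <| by
    rw [Real.coe_toNNReal s hs.le, hausdorffMeasure_setOf_frequently_eq_zero hs I E hE]
    exact ENNReal.zero_ne_top

end HausdorffCantelli

theorem nint_le_nint_add_abs_sub (x y : ℝ) : nint x ≤ nint y + |x - y| :=
  calc nint x ≤ |x - round y| := round_le x (round y)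
    _ ≤ |x - y| + |y - round y| := abs_sub_le x y _
    _ = nint y + |x - y| := add_comm _ _

theorem Finset.card_le_two_mul_add_one_of_abs_le (s : Finset ℤ) {R : ℝ} (hR : 0 ≤ R)
    (h : ∀ m ∈ s, |(m : ℝ)| ≤ R) : (#s : ℝ) ≤ 2 * R + 1 := by
  have hsub : s ⊆ Finset.Icc (-⌊R⌋) ⌊R⌋ := fun m hm =>
    Finset.mem_Icc.2 (abs_le.1 (Int.le_floor.2 (by exact_mod_cast h m hm)))
  have hcard : ((#(Finset.Icc (-⌊R⌋) ⌊R⌋) : ℕ) : ℤ) = 2 * ⌊R⌋ + 1 := by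
    rw [Int.card_Icc_of_le _ _ (by linarith [Int.floor_nonneg.2 hR])]; ring
  calc (#s : ℝ) ≤ #(Finset.Icc (-⌊R⌋) ⌊R⌋) := by exact_mod_cast Finset.card_le_card hsub
    _ = 2 * ⌊R⌋ + 1 := by exact_mod_cast hcard
    _ ≤ 2 * R + 1 := by linarith [Int.floor_le R]

theorem card_filter_nint_mul_div_lt_le (a : ℕ) {b : ℕ} (hb : 0 < b) {δ : ℝ} (hδ : 0 ≤ δ) :
    (#{k ∈ Finset.range b | nint (a * (k : ℕ) / b) < δ} : ℝ) ≤ 2 * δ * b + Nat.gcd a b := by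
  obtain ⟨a', b', hcop, ha, hb'⟩ := Nat.exists_coprime a b
  set g := Nat.gcd a b
  have hg : 0 < g := Nat.gcd_pos_of_pos_right a hb
  have hb'0 : 0 < b' := Nat.pos_of_mul_pos_right (hb'.symm ▸ hb : 0 < b' * g)
  have hfrac : ∀ k : ℕ, (a * k / b : ℝ) = a' * k / b' := fun k => by
    rw [ha, hb']; push_cast; field_simp
  set K := {k ∈ Finset.range b | nint (a * (k : ℕ) / b) < δ}
  -- `|φ k| = b' ‖a k / b‖`, and `φ k` determines `k` modulo `b'` because `a'` is a unit mod `b'`.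
  let φ : ℕ → ℤ := fun k => a' * k - b' * round (a * k / b : ℝ)
  have hφ : ∀ k ∈ K, |(φ k : ℝ)| ≤ δ * b' := fun k hk => by
    have hk := (Finset.mem_filter.1 hk).2
    have : (φ k : ℝ) = b' * (a * k / b - round (a * k / b : ℝ)) := by
      simp only [φ, hfrac]; push_cast; field_simp
    rw [this, abs_mul, Nat.abs_cast, mul_comm]
    exact mul_le_mul_of_nonneg_right hk.le (Nat.cast_nonneg _)
  have hinj : Set.InjOn (fun k => (k / b', φ k)) K := by
    intro k hk k' hk' hkk'
    obtain ⟨hdiv, hφkk'⟩ := Prod.mk.inj hkk'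
    have hmod : a' * k ≡ a' * k' [MOD b'] :=
      Nat.modEq_iff_dvd.2 ⟨round (a * k' / b : ℝ) - round (a * k / b : ℝ), by
        simp only [φ] at hφkk'; push_cast; linarith⟩
    have hrem : k % b' = k' % b' := Nat.ModEq.cancel_left_of_coprime hcop.symm hmod
    rw [← Nat.div_add_mod k b', ← Nat.div_add_mod k' b', hrem]
    exact congrArg (b' * · + k' % b') hdiv
  have hmaps : Set.MapsTo (fun k => (k / b', φ k)) K
      (Finset.range g ×ˢ K.image φ : Finset (ℕ × ℤ)) := by
    intro k hk
    have hkb : k < b := Finset.mem_range.1 (Finset.mem_filter.1 hk).1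
    refine Finset.mem_product.2 ⟨Finset.mem_range.2 ?_, Finset.mem_image_of_mem φ hk⟩
    exact (Nat.div_lt_iff_lt_mul hb'0).2 (by rwa [mul_comm, ← hb'])
  have himage : (#(K.image φ) : ℝ) ≤ 2 * (δ * b') + 1 :=
    Finset.card_le_two_mul_add_one_of_abs_le _ (by positivity) <| by
      simpa only [Finset.forall_mem_image] using hφ
  calc (#K : ℝ) ≤ g * #(K.image φ) := by
        exact_mod_cast (Finset.card_le_card_of_injOn _ hmaps hinj).trans_eq
          (by rw [Finset.card_product, Finset.card_range])
    _ ≤ g * (2 * (δ * b') + 1) := by gcongr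
    _ = 2 * δ * b + g := by rw [hb']; push_cast; ring

theorem exists_nint_lt_two_mul_and_mem_Icc {a b : ℕ} (hab : a ≤ b) (hb : 0 < b) {ψ x : ℝ}
    (hx : x ∈ Icc 0 1) (hax : nint (a * x) < ψ) (hbx : nint (b * x) < ψ) :
    ∃ k ∈ Finset.range (b + 1),
      nint (a * (k : ℕ) / b) < 2 * ψ ∧ x ∈ Icc ((k - ψ) / b) ((k + ψ) / b) := by
  have hbR : (0 : ℝ) < b := Nat.cast_pos.2 hb
  have hbx_le : (b : ℝ) * x ≤ b := mul_le_of_le_one_right hbR.le hx.2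
  obtain ⟨k, hk⟩ := Int.eq_ofNat_of_zero_le
    ((round_eq ((b : ℝ) * x)).symm ▸ Int.floor_nonneg.2 (by nlinarith [hx.1]))
  have hkx : |(b : ℝ) * x - k| < ψ := by simpa [nint, hk] using hbx
  refine ⟨k, Finset.mem_range.2 ?_, ?_, ?_⟩
  · have : (k : ℝ) < b + 1 := by
      have := round_le_add_half ((b : ℝ) * x)
      rw [hk] at this
      push_cast at this
      linarith
    exact_mod_cast this
  · have hab' : (a : ℝ) / b ≤ 1 := (div_le_one hbR).2 (Nat.cast_le.2 hab)
    have hdist : |a * (k : ℝ) / b - a * x| ≤ |(b : ℝ) * x - k| := by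
      rw [show a * (k : ℝ) / b - a * x = a / b * (k - b * x) by field_simp, abs_mul,
        abs_of_nonneg (by positivity), abs_sub_comm]
      exact mul_le_of_le_one_left (abs_nonneg _) hab'
    linarith [nint_le_nint_add_abs_sub (a * (k : ℝ) / b) (a * x)]
  · obtain ⟨h₁, h₂⟩ := abs_lt.1 hkx
    constructor
    · rw [div_le_iff₀ hbR]; linarith
    · rw [le_div_iff₀ hbR]; linarith

theorem sum_ediam_Icc_rpow_le (a : ℕ) {b : ℕ} (hb : 0 < b) {ψ : ℝ} (hψ : 0 < ψ) (s : ℝ) :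
    ∑ k ∈ Finset.range (b + 1) with nint (a * (k : ℕ) / b) < 2 * ψ,
        Metric.ediam (Icc ((k - ψ) / b) ((k + ψ) / b)) ^ s ≤
      ENNReal.ofReal (4 * 2 ^ s * ((Nat.gcd a b + b * ψ) * (ψ / b) ^ s)) := by
  have hK : #{k ∈ Finset.range (b + 1) | nint (a * (k : ℕ) / b) < 2 * ψ} ≤
      #{k ∈ Finset.range b | nint (a * (k : ℕ) / b) < 2 * ψ} + 1 := by
    rw [Finset.range_add_one, Finset.filter_insert]
    split_ifs
    exacts [Finset.card_insert_le _ _, Nat.le_succ _]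
  set K := {k ∈ Finset.range (b + 1) | nint (a * (k : ℕ) / b) < 2 * ψ}
  have hg : (1 : ℝ) ≤ Nat.gcd a b := Nat.one_le_cast.2 (Nat.gcd_pos_of_pos_right a hb)
  have hcard : (#K : ℝ) ≤ 4 * (Nat.gcd a b + b * ψ) := by
    have hK' : (#K : ℝ) ≤ #{k ∈ Finset.range b | nint (a * (k : ℕ) / b) < 2 * ψ} + 1 := by
      exact_mod_cast hK
    linarith [card_filter_nint_mul_div_lt_le a hb (by positivity : (0 : ℝ) ≤ 2 * ψ)]
  have hdiam : ∀ k : ℕ, Metric.ediam (Icc ((k - ψ) / b) ((k + ψ) / b)) =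
      ENNReal.ofReal (2 * (ψ / b)) := fun k => by
    rw [Real.ediam_Icc]; congr 1; ring
  rw [Finset.sum_congr rfl fun k _ => by rw [hdiam k], Finset.sum_const, nsmul_eq_mul,
    ENNReal.ofReal_rpow_of_pos (by positivity), ← ENNReal.ofReal_natCast,
    ← ENNReal.ofReal_mul (Nat.cast_nonneg _)]
  refine ENNReal.ofReal_le_ofReal ?_
  calc (#K : ℝ) * (2 * (ψ / b)) ^ s = #K * (2 ^ s * (ψ / b) ^ s) := by
        rw [Real.mul_rpow zero_le_two (by positivity)]
    _ ≤ 4 * (Nat.gcd a b + b * ψ) * (2 ^ s * (ψ / b) ^ s) := by gcongr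
    _ = 4 * 2 ^ s * ((Nat.gcd a b + b * ψ) * (ψ / b) ^ s) := by ring

theorem stmt13_general (a b : ℕ → ℕ) (hb : ∀ n, 0 < b n)
    (hab : ∀ n, a n ≤ b n)
    (ψ : ℕ → ℝ) (hψ : ∀ n, ψ n ∈ Ioo (0 : ℝ) 1) :
    dimH {x : ℝ | x ∈ Icc (0 : ℝ) 1 ∧
        ∃ᶠ n in atTop, max (nint ((a n : ℝ) * x)) (nint ((b n : ℝ) * x)) < ψ n} ≤
      ⨅ (s : ℝ) (_ : 0 < s ∧ Summable (fun n =>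
          ((Nat.gcd (a n) (b n) : ℝ) + (b n : ℝ) * ψ n) * (ψ n / (b n : ℝ)) ^ s)),
        ENNReal.ofReal s := by
  refine le_iInf₂ fun s ⟨hs, hsum⟩ => (dimH_mono ?_).trans <|
    dimH_setOf_frequently_le hs
      (fun n => {k ∈ Finset.range (b n + 1) | nint (a n * (k : ℕ) / b n) < 2 * ψ n})
      (fun n k => Icc ((k - ψ n) / b n) ((k + ψ n) / b n)) ?_
  · rintro x ⟨hx, hfreq⟩
    refine hfreq.mono fun n hn => ?_
    obtain ⟨k, hk, hnk, hxk⟩ := exists_nint_lt_two_mul_and_mem_Icc (hab n) (hb n) hx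
      ((le_max_left _ _).trans_lt hn) ((le_max_right _ _).trans_lt hn)
    exact ⟨k, Finset.mem_filter.2 ⟨hk, hnk⟩, hxk⟩
  · refine ne_top_of_le_ne_top ?_
      (ENNReal.tsum_le_tsum fun n => sum_ediam_Icc_rpow_le (a n) (hb n) (hψ n).1 s)
    rw [← ENNReal.ofReal_tsum_of_nonneg (fun n => ?_) (hsum.mul_left _)]
    · exact ENNReal.ofReal_ne_top
    · have := (hψ n).1
      positivity

theorem stmt13 (a b : ℕ → ℕ) (ha : ∀ n, 0 < a n) (hb : ∀ n, 0 < b n)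
    (hab : ∀ n, a n ≤ b n)
    (ψ : ℕ → ℝ) (hψ : ∀ n, ψ n ∈ Ioo (0 : ℝ) 1) :
    dimH {x : ℝ | x ∈ Icc (0 : ℝ) 1 ∧
        ∃ᶠ n in atTop, max (nint ((a n : ℝ) * x)) (nint ((b n : ℝ) * x)) < ψ n} ≤
      ⨅ (s : ℝ) (_ : 0 < s ∧ Summable (fun n =>
          ((Nat.gcd (a n) (b n) : ℝ) + (b n : ℝ) * ψ n) * (ψ n / (b n : ℝ)) ^ s)),
        ENNReal.ofReal s :=
  stmt13_general a b hb hab ψ hψ
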